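/- arXiv:1303.3697 — 2 statements merged into one kernel-verified Lean document; each statement's English description precedes it below -/
import Mathlib

section
/- Let I ⊆ ℝ be an open invex set with respect to η : I × I → ℝ₊, let f : I → ℝ be differentiable, a, b ∈ I with η(b,a) ≠ 0, and let q ≥ 1. If |f'|^q is preinvex on I, then |(1/6)[f(a) + 4f(a + η(b,a)/2) + f(a + η(b,a))] − (1/η(b,a)) ∫_a^{a+η(b,a)} f(x) dx| ≤ η(b,a)·(5/72)^{1−1/q} · [ ((61|f'(a)|^q + 29|f'(b)|^q)/1296)^{1/q} + ((29|f'(a)|^q + 61|f'(b)|^q)/1296)^{1/q} ]. -/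
/-!
Put `L = η(b,a) > 0` and `φ(t) = f'(a + tL)`. Integrating by parts against the Simpson kernel,
`t - 1/6` on `[0, 1/2]` and `t - 5/6` on `[1/2, 1]`, writes the Simpson error as
`L (∫₀^{1/2} (t - 1/6) φ + ∫_{1/2}^1 (t - 5/6) φ)`. On each half, the weighted Hölder
(power mean) inequality with weight `|kernel|` bounds the integral by
`(∫ |kernel|)^{1-1/q} (∫ |kernel| |φ|^q)^{1/q}`. Preinvexity bounds `|φ(t)|^q` by
`(1 - t) A + t B` with `A = |f'(a)|^q`, `B = |f'(b)|^q`, and the remaining polynomial integrals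
are `5/72` and `(61A + 29B)/1296`, resp. `(29A + 61B)/1296`.
-/

open Real MeasureTheory intervalIntegral Set

section WeightedHolder

variable {α : Type*} [MeasurableSpace α] {μ : Measure α}

theorem memLp_ofReal_of_integrable_abs_rpow {F : α → ℝ} {p : ℝ} (hp : 0 < p)
    (hF : AEStronglyMeasurable F μ) (hFp : Integrable (fun x => |F x| ^ p) μ) :
    MemLp F (ENNReal.ofReal p) μ := by
  rw [← integrable_norm_rpow_iff hF (by simpa using hp) ENNReal.ofReal_ne_top,
    ENNReal.toReal_ofReal hp.le]
  exact hFp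

theorem integral_mul_le_weight_mul_Lp {w g : α → ℝ} {q : ℝ} (hq : 1 ≤ q)
    (hw : ∀ x, 0 ≤ w x) (hg : ∀ x, 0 ≤ g x) (hwi : Integrable w μ)
    (hgm : AEStronglyMeasurable g μ) (hwg : Integrable (fun x => w x * g x ^ q) μ) :
    ∫ x, w x * g x ∂μ ≤
      (∫ x, w x ∂μ) ^ (1 - 1 / q) * (∫ x, w x * g x ^ q ∂μ) ^ (1 / q) := by
  obtain rfl | hq := hq.eq_or_lt
  · simp
  have hpq : (q.conjExponent).HolderConjugate q := (Real.HolderConjugate.conjExponent hq).symm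
  set p := q.conjExponent
  have hinv : 1 / p = 1 - 1 / q := by
    rw [eq_sub_iff_add_eq]; simpa using hpq.inv_add_inv_eq_one
  have hwp : ∀ x, (w x ^ (1 / p)) ^ p = w x := fun x => by
    rw [← rpow_mul (hw x), one_div_mul_cancel hpq.ne_zero, rpow_one]
  have hgq : ∀ x, (w x ^ (1 / q) * g x) ^ q = w x * g x ^ q := fun x => by
    rw [mul_rpow (rpow_nonneg (hw x) _) (hg x), ← rpow_mul (hw x),
      one_div_mul_cancel hpq.symm.ne_zero, rpow_one]
  calc ∫ x, w x * g x ∂μ = ∫ x, w x ^ (1 / p) * (w x ^ (1 / q) * g x) ∂μ := by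
        refine integral_congr_ae (.of_forall fun x => ?_)
        beta_reduce
        rw [← mul_assoc, ← rpow_add' (hw x) (by rw [hinv]; simp), hinv, sub_add_cancel,
          rpow_one]
    _ ≤ (∫ x, (w x ^ (1 / p)) ^ p ∂μ) ^ (1 / p) *
          (∫ x, (w x ^ (1 / q) * g x) ^ q ∂μ) ^ (1 / q) := by
        refine integral_mul_le_Lp_mul_Lq_of_nonneg hpq
          (.of_forall fun x => rpow_nonneg (hw x) _)
          (.of_forall fun x => mul_nonneg (rpow_nonneg (hw x) _) (hg x)) ?_ ?_
        · refine memLp_ofReal_of_integrable_abs_rpow hpq.pos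
            (hwi.aemeasurable.pow_const _).aestronglyMeasurable ?_
          simpa only [abs_of_nonneg (rpow_nonneg (hw _) _), hwp] using hwi
        · refine memLp_ofReal_of_integrable_abs_rpow hpq.symm.pos
            ((hwi.aemeasurable.pow_const _).aestronglyMeasurable.mul hgm) ?_
          simpa only [abs_of_nonneg (mul_nonneg (rpow_nonneg (hw _) _) (hg _)), hgq] using hwg
    _ = (∫ x, w x ∂μ) ^ (1 - 1 / q) * (∫ x, w x * g x ^ q ∂μ) ^ (1 / q) := by
        simp only [hwp, hgq]
        rw [hinv]

end WeightedHolder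

theorem self_le_one_add_rpow {x q : ℝ} (hx : 0 ≤ x) (hq : 1 ≤ q) : x ≤ 1 + x ^ q := by
  rcases le_total x 1 with hx1 | hx1
  · linarith [rpow_nonneg hx q]
  · linarith [self_le_rpow_of_one_le hx1 hq]

theorem IntervalIntegrable.of_abs_rpow_le {φ h : ℝ → ℝ} {x y q : ℝ} (hq : 1 ≤ q)
    (hφ : AEStronglyMeasurable φ (volume.restrict (uIoc x y)))
    (hh : IntervalIntegrable h volume x y) (hφh : ∀ t ∈ uIoc x y, |φ t| ^ q ≤ h t) :
    IntervalIntegrable φ volume x y := by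
  refine IntervalIntegrable.mono_fun' (g := fun t => 1 + h t) (intervalIntegrable_const.add hh)
    hφ ?_
  filter_upwards [ae_restrict_mem measurableSet_uIoc] with t ht
  exact (self_le_one_add_rpow (abs_nonneg _) hq).trans (by simpa using hφh t ht)

theorem abs_integral_mul_le_of_abs_rpow_le {k φ h : ℝ → ℝ} {x y q : ℝ} (hxy : x ≤ y)
    (hq : 1 ≤ q) (hk : IntervalIntegrable k volume x y)
    (hφ : AEStronglyMeasurable φ (volume.restrict (Ioc x y)))
    (hkh : IntervalIntegrable (fun t => |k t| * h t) volume x y)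
    (hφh : ∀ t ∈ Ioc x y, |φ t| ^ q ≤ h t) :
    |∫ t in x..y, k t * φ t| ≤
      (∫ t in x..y, |k t|) ^ (1 - 1 / q) * (∫ t in x..y, |k t| * h t) ^ (1 / q) := by
  have hkφ : IntegrableOn (fun t => |k t| * |φ t| ^ q) (Ioc x y) := by
    refine hkh.1.mono' (hk.abs.1.aestronglyMeasurable.mul
      (hφ.norm.aemeasurable.pow_const _).aestronglyMeasurable) ?_
    filter_upwards [ae_restrict_mem measurableSet_Ioc] with t ht
    rw [norm_mul, norm_abs_eq_norm, Real.norm_eq_abs,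
      Real.norm_of_nonneg (rpow_nonneg (abs_nonneg _) _)]
    exact mul_le_mul_of_nonneg_left (hφh t ht) (abs_nonneg _)
  simp only [integral_of_le hxy]
  calc |∫ t in Ioc x y, k t * φ t| ≤ ∫ t in Ioc x y, |k t| * |φ t| := by
        simpa only [abs_mul] using
          MeasureTheory.abs_integral_le_integral_abs (f := fun t => k t * φ t)
    _ ≤ (∫ t in Ioc x y, |k t|) ^ (1 - 1 / q) *
          (∫ t in Ioc x y, |k t| * |φ t| ^ q) ^ (1 / q) :=
        integral_mul_le_weight_mul_Lp hq (fun t => abs_nonneg _) (fun t => abs_nonneg _)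
          hk.abs.1 hφ.norm hkφ
    _ ≤ (∫ t in Ioc x y, |k t|) ^ (1 - 1 / q) * (∫ t in Ioc x y, |k t| * h t) ^ (1 / q) := by
        refine mul_le_mul_of_nonneg_left (rpow_le_rpow ?_ ?_ (one_div_nonneg.2 (by linarith)))
          (rpow_nonneg (setIntegral_nonneg measurableSet_Ioc fun t _ => abs_nonneg _) _)
        · exact setIntegral_nonneg measurableSet_Ioc fun t _ =>
            mul_nonneg (abs_nonneg _) (rpow_nonneg (abs_nonneg _) _)
        · exact setIntegral_mono_on hkφ hkh.1 measurableSet_Ioc fun t ht =>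
            mul_le_mul_of_nonneg_left (hφh t ht) (abs_nonneg _)

theorem integral_sub_mul_deriv_eq {F F' : ℝ → ℝ} {x y : ℝ} (c : ℝ)
    (hF : ∀ t ∈ uIcc x y, HasDerivAt F (F' t) t) (hF' : IntervalIntegrable F' volume x y) :
    ∫ t in x..y, (t - c) * F' t = (y - c) * F y - (x - c) * F x - ∫ t in x..y, F t := by
  simpa using integral_mul_deriv_eq_deriv_mul (fun t _ => (hasDerivAt_id t).sub_const c) hF
    intervalIntegrable_const hF'

theorem simpson_sub_integral_eq {F F' : ℝ → ℝ}
    (hF : ∀ t ∈ Icc (0:ℝ) 1, HasDerivAt F (F' t) t) (hF' : IntervalIntegrable F' volume 0 1) :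
    1 / 6 * (F 0 + 4 * F (1 / 2) + F 1) - ∫ t in (0:ℝ)..1, F t =
      (∫ t in (0:ℝ)..1 / 2, (t - 1 / 6) * F' t) +
        ∫ t in (1 / 2:ℝ)..1, (t - 5 / 6) * F' t := by
  have hsub₁ : uIcc (0:ℝ) (1 / 2) ⊆ Icc 0 1 := by
    rw [uIcc_of_le (by norm_num)]; exact Icc_subset_Icc le_rfl (by norm_num)
  have hsub₂ : uIcc (1 / 2:ℝ) 1 ⊆ Icc 0 1 := by
    rw [uIcc_of_le (by norm_num)]; exact Icc_subset_Icc (by norm_num) le_rfl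
  have hFc : ContinuousOn F (Icc 0 1) := fun t ht => (hF t ht).continuousAt.continuousWithinAt
  rw [← integral_add_adjacent_intervals (hFc.mono hsub₁).intervalIntegrable
      (hFc.mono hsub₂).intervalIntegrable,
    integral_sub_mul_deriv_eq _ (fun t ht => hF t (hsub₁ ht))
      (hF'.mono_set (by rwa [uIcc_of_le zero_le_one])),
    integral_sub_mul_deriv_eq _ (fun t ht => hF t (hsub₂ ht))
      (hF'.mono_set (by rwa [uIcc_of_le zero_le_one]))]
  ring

theorem simpson_error_eq {f f' : ℝ → ℝ} {a L : ℝ} (hL : L ≠ 0)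
    (hf : ∀ t ∈ Icc (0:ℝ) 1, HasDerivAt f (f' (a + t * L)) (a + t * L))
    (hf' : IntervalIntegrable (fun t => f' (a + t * L)) volume 0 1) :
    1 / 6 * (f a + 4 * f (a + L / 2) + f (a + L)) - 1 / L * ∫ x in a..a + L, f x =
      L * ((∫ t in (0:ℝ)..1 / 2, (t - 1 / 6) * f' (a + t * L)) +
        ∫ t in (1 / 2:ℝ)..1, (t - 5 / 6) * f' (a + t * L)) := by
  have hF : ∀ t ∈ Icc (0:ℝ) 1, HasDerivAt (fun s => f (a + s * L)) (f' (a + t * L) * L) t :=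
    fun t ht => (hf t ht).comp t ((hasDerivAt_mul_const L).const_add a)
  have hsubst : ∫ t in (0:ℝ)..1, f (a + t * L) = 1 / L * ∫ x in a..a + L, f x := by
    simp_rw [mul_comm _ L]
    rw [integral_comp_add_mul f hL]
    simp
  have hsimpson := simpson_sub_integral_eq hF (hf'.mul_const L)
  simp only [zero_mul, add_zero, one_mul, hsubst] at hsimpson
  rw [show a + L / 2 = a + 1 / 2 * L by ring, hsimpson, mul_add,
    ← intervalIntegral.integral_const_mul, ← intervalIntegral.integral_const_mul]
  congr 1 <;> exact integral_congr fun t _ => by ring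

theorem integral_quadratic (c₀ c₁ c₂ x y : ℝ) :
    ∫ t in x..y, (c₀ + c₁ * t + c₂ * t ^ 2) =
      c₀ * (y - x) + c₁ * (y ^ 2 - x ^ 2) / 2 + c₂ * (y ^ 3 - x ^ 3) / 3 := by
  rw [integral_add (Continuous.intervalIntegrable (by fun_prop) _ _)
      (Continuous.intervalIntegrable (by fun_prop) _ _),
    integral_add intervalIntegrable_const (Continuous.intervalIntegrable (by fun_prop) _ _),
    intervalIntegral.integral_const_mul, intervalIntegral.integral_const_mul]
  simp
  ring

theorem integral_abs_sub_one_sixth_mul (A B : ℝ) :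
    ∫ t in (0:ℝ)..1 / 2, |t - 1 / 6| * ((1 - t) * A + t * B) = (61 * A + 29 * B) / 1296 := by
  have hcont : Continuous fun t : ℝ => |t - 1 / 6| * ((1 - t) * A + t * B) := by fun_prop
  rw [← integral_add_adjacent_intervals (b := 1 / 6) (hcont.intervalIntegrable _ _)
    (hcont.intervalIntegrable _ _)]
  have h₁ : ∫ t in (0:ℝ)..1 / 6, |t - 1 / 6| * ((1 - t) * A + t * B) =
      ∫ t in (0:ℝ)..1 / 6, (A / 6 + ((B - A) / 6 - A) * t + (A - B) * t ^ 2) := by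
    refine integral_congr fun t ht => ?_
    rw [uIcc_of_le (by norm_num)] at ht
    rw [abs_of_nonpos (by linarith [ht.2])]; ring
  have h₂ : ∫ t in (1 / 6:ℝ)..1 / 2, |t - 1 / 6| * ((1 - t) * A + t * B) =
      ∫ t in (1 / 6:ℝ)..1 / 2, (-A / 6 + (A - (B - A) / 6) * t + (B - A) * t ^ 2) := by
    refine integral_congr fun t ht => ?_
    rw [uIcc_of_le (by norm_num)] at ht
    rw [abs_of_nonneg (by linarith [ht.1])]; ring
  rw [h₁, h₂, integral_quadratic, integral_quadratic]
  ring

theorem integral_abs_sub_five_sixths_mul (A B : ℝ) :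
    ∫ t in (1 / 2:ℝ)..1, |t - 5 / 6| * ((1 - t) * A + t * B) = (29 * A + 61 * B) / 1296 := by
  -- `t ↦ 1 - t` maps `[0, 1/2]` onto `[1/2, 1]`, the kernel onto itself, and swaps `A` and `B`.
  have hreflect := integral_comp_sub_left
    (fun t => |t - 5 / 6| * ((1 - t) * A + t * B)) (a := 0) (b := 1 / 2) (1:ℝ)
  norm_num at hreflect
  rw [← hreflect, show 29 * A + 61 * B = 61 * B + 29 * A by ring,
    ← integral_abs_sub_one_sixth_mul B A]
  refine integral_congr fun t _ => ?_
  rw [show (1 - t - 5 / 6 : ℝ) = -(t - 1 / 6) by ring, abs_neg]; ring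

theorem integral_abs_sub_one_sixth : ∫ t in (0:ℝ)..1 / 2, |t - 1 / 6| = 5 / 72 := by
  have h := integral_abs_sub_one_sixth_mul 1 1
  simp only [mul_one, sub_add_cancel] at h
  rw [h]; norm_num

theorem integral_abs_sub_five_sixths : ∫ t in (1 / 2:ℝ)..1, |t - 5 / 6| = 5 / 72 := by
  have h := integral_abs_sub_five_sixths_mul 1 1
  simp only [mul_one, sub_add_cancel] at h
  rw [h]; norm_num

theorem stmt4 (I : Set ℝ) (η : ℝ → ℝ → ℝ) (f : ℝ → ℝ) (a b : ℝ)
    (hI : IsOpen I)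
    (hinv : ∀ u ∈ I, ∀ v ∈ I, ∀ t ∈ Set.Icc (0:ℝ) 1, u + t * η v u ∈ I)
    (hηnn : ∀ u ∈ I, ∀ v ∈ I, 0 ≤ η v u)
    (ha : a ∈ I) (hb : b ∈ I) (hη : η b a ≠ 0)
    (hf : DifferentiableOn ℝ f I)
    (q : ℝ) (hq : 1 ≤ q)
    (hpre : ∀ u ∈ I, ∀ v ∈ I, ∀ t ∈ Set.Icc (0:ℝ) 1,
      |deriv f (u + t * η v u)| ^ q ≤ (1 - t) * |deriv f u| ^ q + t * |deriv f v| ^ q) :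
    |(1/6 : ℝ) * (f a + 4 * f (a + η b a / 2) + f (a + η b a)) -
      (1 / η b a) * ∫ x in a..(a + η b a), f x| ≤ η b a * (5/72) ^ (1 - 1/q) *
      (((61 * |deriv f a| ^ q + 29 * |deriv f b| ^ q) / 1296) ^ (1/q) +
       ((29 * |deriv f a| ^ q + 61 * |deriv f b| ^ q) / 1296) ^ (1/q)) := by
  set L := η b a
  set A := |deriv f a| ^ q
  set B := |deriv f b| ^ q
  set φ : ℝ → ℝ := fun t => deriv f (a + t * L)
  have hL : 0 < L := (hηnn a ha b hb).lt_of_ne' hη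
  have hφq : ∀ t ∈ Icc (0:ℝ) 1, |φ t| ^ q ≤ (1 - t) * A + t * B := hpre a ha b hb
  have hφm : Measurable φ := (measurable_deriv f).comp (by fun_prop)
  have hderiv : ∀ t ∈ Icc (0:ℝ) 1, HasDerivAt f (φ t) (a + t * L) := fun t ht =>
    (hf.differentiableAt (hI.mem_nhds (hinv a ha b hb t ht))).hasDerivAt
  have hφi : IntervalIntegrable φ volume 0 1 :=
    .of_abs_rpow_le hq hφm.aestronglyMeasurable (Continuous.intervalIntegrable (by fun_prop) _ _)
      fun t ht => hφq t (Ioc_subset_Icc_self (by rwa [uIoc_of_le zero_le_one] at ht))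
  rw [simpson_error_eq hL.ne' hderiv hφi, abs_mul, abs_of_pos hL, mul_assoc, mul_add]
  refine mul_le_mul_of_nonneg_left ((abs_add_le _ _).trans (add_le_add ?_ ?_)) hL.le
  · have h := abs_integral_mul_le_of_abs_rpow_le (k := fun t => t - 1 / 6) (x := 0) (y := 1 / 2)
      (by norm_num) hq (Continuous.intervalIntegrable (by fun_prop) _ _) hφm.aestronglyMeasurable
      (Continuous.intervalIntegrable (by fun_prop) _ _)
      fun t ht => hφq t ⟨ht.1.le, by linarith [ht.2]⟩
    rwa [integral_abs_sub_one_sixth, integral_abs_sub_one_sixth_mul] at h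
  · have h := abs_integral_mul_le_of_abs_rpow_le (k := fun t => t - 5 / 6) (x := 1 / 2) (y := 1)
      (by norm_num) hq (Continuous.intervalIntegrable (by fun_prop) _ _) hφm.aestronglyMeasurable
      (Continuous.intervalIntegrable (by fun_prop) _ _)
      fun t ht => hφq t ⟨by linarith [ht.1], ht.2⟩
    rwa [integral_abs_sub_five_sixths, integral_abs_sub_five_sixths_mul] at h
end

section
/- Let I ⊆ ℝ be an open invex set with respect to η : I × I → ℝ₊, let f : I → ℝ be differentiable, a, b ∈ I with η(b,a) ≠ 0, and let q > 1 with p = q/(q−1). If |f'|^q is prequasiinvex on I, then |(1/6)[f(a) + 4f(a + η(b,a)/2) + f(a + η(b,a))] − (1/η(b,a)) ∫_a^{a+η(b,a)} f(x) dx| ≤ 2·η(b,a)·((1 + 2^{p+1})/(6^{p+1}(p+1)))^{1/p} · ((max{|f'(a)|^q, |f'(b)|^q})/2)^{1/q}. -/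
/-!
Put `h = η(b,a)`. Integrating by parts against the Peano kernel of
Simpson's rule on `[0,1]`, `k(t) = t - 1/6` on `[0,1/2]` and `k(t) = t - 5/6` on `(1/2,1]`,
turns the left-hand side into `h ∫₀¹ k(t) f'(a + t h) dt`. Since `[a, a + h]` is the segment
`{a + t η(b,a)}`, prequasiinvexity bounds `|f'|^q` on it by `M = max {|f'(a)|^q, |f'(b)|^q}`, so
Hölder's inequality bounds the integral by `‖k‖_p M^{1/q}`, and `‖k‖_p^p` is computed exactly:
`2 (1 + 2^{p+1}) / (6^{p+1} (p+1))`. The factor `2^{1/p} = 2 · 2^{-1/q}` then gives the stated form.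
-/

open Real MeasureTheory intervalIntegral Set

noncomputable def simpsonKernel (t : ℝ) : ℝ := if t ≤ 1 / 2 then t - 1 / 6 else t - 5 / 6

lemma simpsonKernel_of_le {t : ℝ} (ht : t ≤ 1 / 2) : simpsonKernel t = t - 1 / 6 := if_pos ht

lemma simpsonKernel_of_lt {t : ℝ} (ht : 1 / 2 < t) : simpsonKernel t = t - 5 / 6 :=
  if_neg ht.not_ge

lemma integral_sub_mul_deriv {g g' : ℝ → ℝ} {c d : ℝ} (e : ℝ)
    (hg : ∀ t ∈ uIcc c d, HasDerivAt g (g' t) t) (hg' : IntervalIntegrable g' volume c d) :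
    ∫ t in c..d, (t - e) * g' t = (d - e) * g d - (c - e) * g c - ∫ t in c..d, g t := by
  simpa using integral_mul_deriv_eq_deriv_mul (fun t _ => (hasDerivAt_id t).sub_const e) hg
    intervalIntegrable_const hg'

theorem integral_simpsonKernel_mul_deriv {g g' : ℝ → ℝ}
    (hg : ∀ t ∈ Icc (0 : ℝ) 1, HasDerivAt g (g' t) t) (hg' : IntervalIntegrable g' volume 0 1) :
    ∫ t in (0 : ℝ)..1, simpsonKernel t * g' t =
      (g 0 + 4 * g (1 / 2) + g 1) / 6 - ∫ t in (0 : ℝ)..1, g t := by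
  have hsub₁ : uIcc (0 : ℝ) (1 / 2) ⊆ Icc 0 1 := by
    rw [uIcc_of_le (by norm_num)]; exact Icc_subset_Icc le_rfl (by norm_num)
  have hsub₂ : uIcc (1 / 2 : ℝ) 1 ⊆ Icc 0 1 := by
    rw [uIcc_of_le (by norm_num)]; exact Icc_subset_Icc (by norm_num) le_rfl
  have hg_cont : ContinuousOn g (Icc 0 1) := fun t ht => (hg t ht).continuousAt.continuousWithinAt
  have hk₁ : EqOn (fun t => (t - 1 / 6) * g' t) (fun t => simpsonKernel t * g' t) (uIoc 0 (1 / 2)) :=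
    fun t ht => by
      rw [uIoc_of_le (by norm_num)] at ht
      simp only [simpsonKernel_of_le ht.2]
  have hk₂ : EqOn (fun t => (t - 5 / 6) * g' t) (fun t => simpsonKernel t * g' t) (uIoc (1 / 2) 1) :=
    fun t ht => by
      rw [uIoc_of_le (by norm_num)] at ht
      simp only [simpsonKernel_of_lt ht.1]
  have hg'₁ : IntervalIntegrable g' volume 0 (1 / 2) := hg'.mono_set (by rwa [uIcc_of_le zero_le_one])
  have hg'₂ : IntervalIntegrable g' volume (1 / 2) 1 := hg'.mono_set (by rwa [uIcc_of_le zero_le_one])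
  rw [← integral_add_adjacent_intervals
      ((hg'₁.continuousOn_mul (g := fun t => t - 1 / 6) (by fun_prop)).congr hk₁)
      ((hg'₂.continuousOn_mul (g := fun t => t - 5 / 6) (by fun_prop)).congr hk₂),
    ← integral_congr_ae (.of_forall fun t ht => hk₁ ht),
    ← integral_congr_ae (.of_forall fun t ht => hk₂ ht),
    integral_sub_mul_deriv _ (fun t ht => hg t (hsub₁ ht)) hg'₁,
    integral_sub_mul_deriv _ (fun t ht => hg t (hsub₂ ht)) hg'₂,
    ← integral_add_adjacent_intervals ((hg_cont.mono hsub₁).intervalIntegrable)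
      ((hg_cont.mono hsub₂).intervalIntegrable)]
  ring

theorem simpson_sub_average_eq {f : ℝ → ℝ} {a h : ℝ} (hh : h ≠ 0)
    (hf : ∀ t ∈ Icc (0 : ℝ) 1, DifferentiableAt ℝ f (a + t * h))
    (hf' : IntervalIntegrable (fun t => deriv f (a + t * h)) volume 0 1) :
    (1 / 6) * (f a + 4 * f (a + h / 2) + f (a + h)) - (1 / h) * ∫ x in a..(a + h), f x =
      h * ∫ t in (0 : ℝ)..1, simpsonKernel t * deriv f (a + t * h) := by
  have hg : ∀ t ∈ Icc (0 : ℝ) 1,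
      HasDerivAt (fun t => f (a + t * h)) (h * deriv f (a + t * h)) t := fun t ht => by
    simpa [mul_comm, Function.comp_def] using
      (hf t ht).hasDerivAt.comp t (((hasDerivAt_id t).mul_const h).const_add a)
  have hidentity := integral_simpsonKernel_mul_deriv hg (hf'.const_mul h)
  have hsubst : ∫ t in (0 : ℝ)..1, f (a + t * h) = h⁻¹ * ∫ x in a..(a + h), f x := by
    simpa [mul_comm] using integral_comp_add_mul f hh a (a := 0) (b := 1)
  simp_rw [mul_left_comm _ h, intervalIntegral.integral_const_mul, hsubst] at hidentity
  rw [hidentity]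
  field_simp
  ring_nf

section AbsSubRpow

variable {p c e d : ℝ}

lemma abs_sub_rpow_eqOn_left (hce : c ≤ e) :
    EqOn (fun t => (e - t) ^ p) (fun t => |t - e| ^ p) (uIoc c e) := fun t ht => by
  rw [uIoc_of_le hce] at ht
  simp only [abs_sub_comm t e, abs_of_nonneg (sub_nonneg.2 ht.2)]

lemma abs_sub_rpow_eqOn_right (hed : e ≤ d) :
    EqOn (fun t => (t - e) ^ p) (fun t => |t - e| ^ p) (uIoc e d) := fun t ht => by
  rw [uIoc_of_le hed] at ht
  simp only [abs_of_nonneg (sub_nonneg.2 ht.1.le)]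

lemma intervalIntegrable_abs_sub_rpow (hp : -1 < p) (hce : c ≤ e) (hed : e ≤ d) :
    IntervalIntegrable (fun t => |t - e| ^ p) volume c d := by
  have hleft : IntervalIntegrable (fun t => (e - t) ^ p) volume c e := by
    simpa using (intervalIntegrable_rpow' hp (a := e - c) (b := 0)).comp_sub_left e
  have hright : IntervalIntegrable (fun t => (t - e) ^ p) volume e d := by
    simpa using (intervalIntegrable_rpow' hp (a := 0) (b := d - e)).comp_sub_right e
  exact (hleft.congr (abs_sub_rpow_eqOn_left hce)).trans
    (hright.congr (abs_sub_rpow_eqOn_right hed))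

lemma integral_abs_sub_rpow (hp : -1 < p) (hce : c ≤ e) (hed : e ≤ d) :
    ∫ t in c..d, |t - e| ^ p = ((e - c) ^ (p + 1) + (d - e) ^ (p + 1)) / (p + 1) := by
  have hp' : p + 1 ≠ 0 := by linarith
  rw [← integral_add_adjacent_intervals (intervalIntegrable_abs_sub_rpow hp hce le_rfl)
      (intervalIntegrable_abs_sub_rpow hp le_rfl hed),
    ← integral_congr_ae (.of_forall fun t ht => abs_sub_rpow_eqOn_left hce ht),
    ← integral_congr_ae (.of_forall fun t ht => abs_sub_rpow_eqOn_right hed ht),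
    integral_comp_sub_left (fun x => x ^ p), integral_comp_sub_right (fun x => x ^ p),
    integral_rpow (Or.inl hp), integral_rpow (Or.inl hp)]
  simp only [sub_self, zero_rpow hp', sub_zero]
  ring

end AbsSubRpow

theorem integral_abs_simpsonKernel_rpow {p : ℝ} (hp : -1 < p) :
    ∫ t in (0 : ℝ)..1, |simpsonKernel t| ^ p =
      2 * ((1 + 2 ^ (p + 1)) / (6 ^ (p + 1) * (p + 1))) := by
  have hk₁ : EqOn (fun t => |t - 1 / 6| ^ p) (fun t => |simpsonKernel t| ^ p) (uIoc 0 (1 / 2)) :=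
    fun t ht => by
      rw [uIoc_of_le (by norm_num)] at ht
      simp only [simpsonKernel_of_le ht.2]
  have hk₂ : EqOn (fun t => |t - 5 / 6| ^ p) (fun t => |simpsonKernel t| ^ p) (uIoc (1 / 2) 1) :=
    fun t ht => by
      rw [uIoc_of_le (by norm_num)] at ht
      simp only [simpsonKernel_of_lt ht.1]
  rw [← integral_add_adjacent_intervals
      ((intervalIntegrable_abs_sub_rpow hp (by norm_num) (by norm_num)).congr hk₁)
      ((intervalIntegrable_abs_sub_rpow hp (by norm_num) (by norm_num)).congr hk₂),
    ← integral_congr_ae (.of_forall fun t ht => hk₁ ht),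
    ← integral_congr_ae (.of_forall fun t ht => hk₂ ht),
    integral_abs_sub_rpow hp (by norm_num) (by norm_num),
    integral_abs_sub_rpow hp (by norm_num) (by norm_num)]
  have h₆ : (1 / 6 : ℝ) ^ (p + 1) = (6 ^ (p + 1))⁻¹ := by rw [one_div, inv_rpow (by norm_num)]
  have h₃ : (1 / 3 : ℝ) ^ (p + 1) = 2 ^ (p + 1) * (6 ^ (p + 1))⁻¹ := by
    rw [← h₆, ← mul_rpow (by norm_num) (by norm_num)]; norm_num
  have hp' : p + 1 ≠ 0 := by linarith
  norm_num [h₆, h₃]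
  field_simp
  ring

lemma memLp_of_abs_rpow_le {α : Type*} [MeasurableSpace α] {μ : Measure α} [IsFiniteMeasure μ]
    {q M : ℝ} (hq : 0 < q) {G : α → ℝ} (hG : AEStronglyMeasurable G μ)
    (hGM : ∀ᵐ x ∂μ, |G x| ^ q ≤ M) (r : ENNReal) : MemLp G r μ :=
  MemLp.of_bound hG (M ^ (1 / q)) <| hGM.mono fun x hx => by
    calc ‖G x‖ = (|G x| ^ q) ^ (1 / q) := by
          rw [← rpow_mul (abs_nonneg _), mul_one_div_cancel hq.ne', rpow_one, Real.norm_eq_abs]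
      _ ≤ M ^ (1 / q) := by gcongr

theorem integral_mul_le_of_abs_rpow_le {α : Type*} [MeasurableSpace α] {μ : Measure α}
    [IsProbabilityMeasure μ] {p q M : ℝ} (hpq : p.HolderConjugate q) {F G : α → ℝ}
    (hF : MemLp F (ENNReal.ofReal p) μ) (hG : AEStronglyMeasurable G μ)
    (hGM : ∀ᵐ x ∂μ, |G x| ^ q ≤ M) :
    ∫ x, |F x| * |G x| ∂μ ≤ (∫ x, |F x| ^ p ∂μ) ^ (1 / p) * M ^ (1 / q) := by
  have hGq : ∫ x, |G x| ^ q ∂μ ≤ M := by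
    simpa using integral_mono_of_nonneg (.of_forall fun x => by positivity) (integrable_const M) hGM
  calc ∫ x, |F x| * |G x| ∂μ
      ≤ (∫ x, |F x| ^ p ∂μ) ^ (1 / p) * (∫ x, |G x| ^ q ∂μ) ^ (1 / q) :=
        integral_mul_norm_le_Lp_mul_Lq hpq hF (memLp_of_abs_rpow_le hpq.symm.pos hG hGM _)
    _ ≤ (∫ x, |F x| ^ p ∂μ) ^ (1 / p) * M ^ (1 / q) := by
        gcongr
        exact (one_div_pos.2 hpq.symm.pos).le

theorem abs_integral_simpsonKernel_mul_le {p q M : ℝ} (hpq : p.HolderConjugate q) {G : ℝ → ℝ}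
    (hG : AEStronglyMeasurable G (volume.restrict (Ioc 0 1)))
    (hGM : ∀ t ∈ Icc (0 : ℝ) 1, |G t| ^ q ≤ M) :
    |∫ t in (0 : ℝ)..1, simpsonKernel t * G t| ≤
      (2 * ((1 + 2 ^ (p + 1)) / (6 ^ (p + 1) * (p + 1)))) ^ (1 / p) * M ^ (1 / q) := by
  have : IsProbabilityMeasure (volume.restrict (Ioc (0 : ℝ) 1)) := ⟨by simp⟩
  have hk : MemLp simpsonKernel (ENNReal.ofReal p) (volume.restrict (Ioc 0 1)) := by
    refine MemLp.of_bound ?_ 1 (ae_restrict_of_forall_mem measurableSet_Ioc fun t ht => ?_)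
    · exact (Measurable.ite measurableSet_Iic (by fun_prop) (by fun_prop)).aestronglyMeasurable
    · unfold simpsonKernel
      rw [Real.norm_eq_abs, abs_le]
      split_ifs <;> constructor <;> linarith [ht.1, ht.2]
  rw [← integral_abs_simpsonKernel_rpow (by linarith [hpq.lt]), integral_of_le zero_le_one,
    integral_of_le zero_le_one]
  calc |∫ t in Ioc 0 1, simpsonKernel t * G t| ≤ ∫ t in Ioc 0 1, |simpsonKernel t| * |G t| := by
        simp_rw [← abs_mul]; exact MeasureTheory.abs_integral_le_integral_abs
    _ ≤ _ := integral_mul_le_of_abs_rpow_le hpq hk hG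
        (ae_restrict_of_forall_mem measurableSet_Ioc fun t ht => hGM t (Ioc_subset_Icc_self ht))

lemma rpow_two_mul_mul_rpow {p q W M : ℝ} (hpq : p.HolderConjugate q) (hW : 0 ≤ W) (hM : 0 ≤ M) :
    (2 * W) ^ (1 / p) * M ^ (1 / q) = 2 * W ^ (1 / p) * (M / 2) ^ (1 / q) := by
  have h2 : (2 : ℝ) ^ (1 / p) * 2 ^ (1 / q) = 2 := by
    rw [← rpow_add two_pos, hpq.one_div_add_one_div, div_one, rpow_one]
  have h2q : (2 : ℝ) ^ (1 / q) ≠ 0 := by positivity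
  rw [mul_rpow zero_le_two hW, div_rpow hM zero_le_two, eq_div_iff h2q |>.mpr h2]
  field_simp

theorem stmt8 (I : Set ℝ) (η : ℝ → ℝ → ℝ) (f : ℝ → ℝ) (a b : ℝ)
    (hI : IsOpen I)
    (hinv : ∀ u ∈ I, ∀ v ∈ I, ∀ t ∈ Set.Icc (0:ℝ) 1, u + t * η v u ∈ I)
    (hηnn : ∀ u ∈ I, ∀ v ∈ I, 0 ≤ η v u)
    (ha : a ∈ I) (hb : b ∈ I) (hη : η b a ≠ 0)
    (hf : DifferentiableOn ℝ f I)
    (q p : ℝ) (hq : 1 < q) (hp : p = q / (q - 1))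
    (hpre : ∀ u ∈ I, ∀ v ∈ I, ∀ t ∈ Set.Icc (0:ℝ) 1,
      |deriv f (u + t * η v u)| ^ q ≤ max (|deriv f u| ^ q) (|deriv f v| ^ q)) :
    |(1/6 : ℝ) * (f a + 4 * f (a + η b a / 2) + f (a + η b a)) -
      (1 / η b a) * ∫ x in a..(a + η b a), f x| ≤ 2 * η b a * ((1 + 2 ^ (p + 1)) / (6 ^ (p + 1) * (p + 1))) ^ (1/p) *
      ((max (|deriv f a| ^ q) (|deriv f b| ^ q)) / 2) ^ (1/q) := by
  set h := η b a
  set M := max (|deriv f a| ^ q) (|deriv f b| ^ q)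
  set W := (1 + 2 ^ (p + 1)) / (6 ^ (p + 1) * (p + 1))
  have hh : 0 < h := (hηnn a ha b hb).lt_of_ne' hη
  have hpq : p.HolderConjugate q := ((holderConjugate_iff_eq_conjExponent hq).2 hp).symm
  have hW : 0 ≤ W := div_nonneg (by positivity) (mul_nonneg (by positivity) (by linarith [hpq.lt]))
  have hM : 0 ≤ M := le_max_of_le_left (by positivity)
  have hf_seg : ∀ t ∈ Icc (0 : ℝ) 1, DifferentiableAt ℝ f (a + t * h) := fun t ht =>
    hf.differentiableAt (hI.mem_nhds (hinv a ha b hb t ht))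
  have hD_meas : AEStronglyMeasurable (fun t => deriv f (a + t * h)) (volume.restrict (Ioc 0 1)) :=
    ((measurable_deriv f).comp (by fun_prop)).aestronglyMeasurable
  have hD_bound : ∀ t ∈ Icc (0 : ℝ) 1, |deriv f (a + t * h)| ^ q ≤ M := hpre a ha b hb
  have hD_int : IntervalIntegrable (fun t => deriv f (a + t * h)) volume 0 1 := by
    rw [intervalIntegrable_iff_integrableOn_Ioc_of_le zero_le_one]
    exact (memLp_of_abs_rpow_le (by linarith) hD_meas (ae_restrict_of_forall_mem measurableSet_Ioc
      fun t ht => hD_bound t (Ioc_subset_Icc_self ht)) 1).integrable le_rfl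
  rw [simpson_sub_average_eq hh.ne' hf_seg hD_int, abs_mul, abs_of_pos hh]
  calc h * |∫ t in (0 : ℝ)..1, simpsonKernel t * deriv f (a + t * h)|
      ≤ h * ((2 * W) ^ (1 / p) * M ^ (1 / q)) := by
        gcongr
        exact abs_integral_simpsonKernel_mul_le hpq hD_meas hD_bound
    _ = 2 * h * W ^ (1 / p) * (M / 2) ^ (1 / q) := by
        rw [rpow_two_mul_mul_rpow hpq hW hM]
        ring
end
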